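/- arXiv:1210.2691 — 9 statements merged into one kernel-verified Lean document; each statement's English description precedes it below -/
import Mathlib

section
/- If G is a torsion-free group in which commuting is a transitive relation on non-identity elements, and some non-identity element x of G has centralizer of finite index in G, then G is abelian. -/
/-- A monoid is torsion-free if no nontrivial elements have finite order (old Mathlib definition). -/
def Monoid.IsTorsionFree (G : Type*) [Monoid G] : Prop :=
  ∀ g : G, g ≠ 1 → ¬IsOfFinOrder g

/-!
A power `g ^ n ≠ 1` of any `g ≠ 1` lies in the finite-index centralizer of `x`; commutative
transitivity through `g ^ n` makes `g` itself commute with `x`. So `x` is central, and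
transitivity through `x` makes any two elements commute.
-/

def Group.IsCommTransitive (G : Type*) [Group G] : Prop :=
  ∀ a b c : G, a ≠ 1 → b ≠ 1 → c ≠ 1 → Commute a b → Commute b c → Commute a c

section

variable {G : Type*} [Group G]

theorem Monoid.IsTorsionFree.pow_ne_one (htf : Monoid.IsTorsionFree G) {g : G} (hg : g ≠ 1)
    {n : ℕ} (hn : 0 < n) : g ^ n ≠ 1 :=
  fun h => htf g hg (isOfFinOrder_iff_pow_eq_one.mpr ⟨n, hn, h⟩)

namespace Group.IsCommTransitive

theorem commute_of_commute_pow (hCT : IsCommTransitive G) {g x : G} {n : ℕ} (hg : g ≠ 1)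
    (hgn : g ^ n ≠ 1) (hx : x ≠ 1) (h : Commute (g ^ n) x) : Commute g x :=
  hCT g (g ^ n) x hg hgn hx (Commute.self_pow g n) h

theorem mem_center_of_centralizer_finiteIndex (hCT : IsCommTransitive G)
    (htf : Monoid.IsTorsionFree G) {x : G} (hx : x ≠ 1)
    (hfi : (Subgroup.centralizer {x}).FiniteIndex) : x ∈ Subgroup.center G := by
  refine Subgroup.mem_center_iff.mpr fun g => ?_
  rcases eq_or_ne g 1 with rfl | hg
  · simp
  obtain ⟨n, hn, _, hmem⟩ := Subgroup.exists_pow_mem_of_index_ne_zero hfi.index_ne_zero g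
  have hgnx : Commute (g ^ n) x := Subgroup.mem_centralizer_singleton_iff.mp hmem
  exact hCT.commute_of_commute_pow hg (htf.pow_ne_one hg hn) hx hgnx

theorem commute_of_mem_center (hCT : IsCommTransitive G) {x : G} (hx : x ≠ 1)
    (hxc : x ∈ Subgroup.center G) (a b : G) : Commute a b := by
  rcases eq_or_ne a 1 with rfl | ha
  · exact Commute.one_left b
  rcases eq_or_ne b 1 with rfl | hb
  · exact Commute.one_right a
  exact hCT a x b ha hx hb (Subgroup.mem_center_iff.mp hxc a)
    (Subgroup.mem_center_iff.mp hxc b).symm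

end Group.IsCommTransitive

end

theorem ct_centralizer_finite_index_abelian (G : Type*) [Group G]
    (htf : Monoid.IsTorsionFree G)
    (hCT : ∀ a b c : G, a ≠ 1 → b ≠ 1 → c ≠ 1 →
      Commute a b → Commute b c → Commute a c)
    (x : G) (hx : x ≠ 1)
    (hfi : (Subgroup.centralizer {x}).FiniteIndex) :
    ∀ a b : G, a * b = b * a := by
  have hCT : Group.IsCommTransitive G := hCT
  exact hCT.commute_of_mem_center hx (hCT.mem_center_of_centralizer_finiteIndex htf hx hfi)
end

section
/- Any subgroup of SL(2,C) not containing -I is commutative transitive: if A, B, C are non-identity matrices in the subgroup with AB = BA and BC = CB, then AC = CA. -/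
/-!
Under `M ↦ (M₀₁, M₁₀, M₀₀ - M₁₁)`, which identifies 2 × 2 matrices modulo scalars with `K³`,
the commutator becomes the cross product, so two matrices commute iff their images are parallel.
Being parallel to a fixed nonzero vector is a transitive relation, and an element of `SL(2, K)`
has zero image only if it is `±I`.
-/

namespace Matrix

variable {R : Type*}

def tracelessCoords [Ring R] (M : Matrix (Fin 2) (Fin 2) R) : Fin 3 → R :=
  ![M 0 1, M 1 0, M 0 0 - M 1 1]

theorem commute_iff_tracelessCoords_cross_eq_zero [CommRing R] {A C : Matrix (Fin 2) (Fin 2) R} :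
    Commute A C ↔ tracelessCoords A ⨯₃ tracelessCoords C = 0 := by
  have hcomm : A * C - C * A = !![(tracelessCoords A ⨯₃ tracelessCoords C) 2,
      (tracelessCoords A ⨯₃ tracelessCoords C) 1;
      (tracelessCoords A ⨯₃ tracelessCoords C) 0, -(tracelessCoords A ⨯₃ tracelessCoords C) 2] := by
    ext i j
    fin_cases i <;> fin_cases j <;> simp [tracelessCoords, cross_apply, mul_apply] <;> ring
  rw [commute_iff_eq, ← sub_eq_zero, hcomm, ← Matrix.ext_iff]
  constructor
  · intro h
    ext i
    fin_cases i
    · simpa using h 1 0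
    · simpa using h 0 1
    · simpa using h 0 0
  · intro h i j
    fin_cases i <;> fin_cases j <;> simp [h]

theorem crossProduct_eq_zero_of_eq_zero_of_eq_zero {F : Type*} [Field F] {u v w : Fin 3 → F}
    (hv : v ≠ 0) (hvu : v ⨯₃ u = 0) (hvw : v ⨯₃ w = 0) : u ⨯₃ w = 0 := by
  have parallel {x : Fin 3 → F} (hx : v ⨯₃ x = 0) : ∃ a : F, a • v = x := by
    by_contra! h
    exact crossProduct_ne_zero_iff_linearIndependent.mpr ((LinearIndependent.pair_iff' hv).mpr h) hx
  obtain ⟨a, rfl⟩ := parallel hvu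
  obtain ⟨c, rfl⟩ := parallel hvw
  simp [cross_self]

namespace SpecialLinearGroup

theorem eq_one_or_eq_neg_one_of_tracelessCoords_eq_zero [CommRing R] [IsDomain R]
    {g : SpecialLinearGroup (Fin 2) R} (hg : tracelessCoords (g : Matrix (Fin 2) (Fin 2) R) = 0) :
    (g : Matrix (Fin 2) (Fin 2) R) = 1 ∨ (g : Matrix (Fin 2) (Fin 2) R) = -1 := by
  have hdet : g 0 0 * g 1 1 - g 0 1 * g 1 0 = 1 := by
    rw [← det_fin_two]; exact g.det_coe
  have h01 : g 0 1 = 0 := by simpa [tracelessCoords] using congr_fun hg 0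
  have h10 : g 1 0 = 0 := by simpa [tracelessCoords] using congr_fun hg 1
  have h11 : g 1 1 = g 0 0 := (sub_eq_zero.mp (by simpa [tracelessCoords] using congr_fun hg 2)).symm
  have hsq : (g 0 0 - 1) * (g 0 0 + 1) = 0 := by
    linear_combination (by simpa [h01, h10, h11] using hdet : g 0 0 * g 0 0 = 1)
  have hscalar : (g : Matrix (Fin 2) (Fin 2) R) = g 0 0 • 1 := by
    ext i j; fin_cases i <;> fin_cases j <;> simp [h01, h10, h11]
  rcases mul_eq_zero.mp hsq with h | h
  · left; rw [hscalar, sub_eq_zero.mp h, one_smul]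
  · right; rw [hscalar, eq_neg_of_add_eq_zero_left h, neg_one_smul]

theorem commute_trans_of_ne_one_of_ne_neg_one {K : Type*} [Field K]
    {A B C : SpecialLinearGroup (Fin 2) K} (hB1 : B ≠ 1)
    (hBneg : (B : Matrix (Fin 2) (Fin 2) K) ≠ -1) (hAB : Commute A B) (hBC : Commute B C) :
    Commute A C := by
  have hB : tracelessCoords (B : Matrix (Fin 2) (Fin 2) K) ≠ 0 := fun h =>
    (eq_one_or_eq_neg_one_of_tracelessCoords_eq_zero h).elim (fun h1 => hB1 (Subtype.ext h1)) hBneg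
  simp only [← commute_map_iff coeMonoidHom_injective, coeMonoidHom_apply,
    commute_iff_tracelessCoords_cross_eq_zero] at hAB hBC ⊢
  exact crossProduct_eq_zero_of_eq_zero_of_eq_zero hB (by rw [← cross_anticomm, hAB, neg_zero]) hBC

end SpecialLinearGroup

end Matrix

theorem subgroup_SL2_no_negI_commutative_transitive_general
    (G : Subgroup (Matrix.SpecialLinearGroup (Fin 2) ℂ))
    (hG : ∀ g ∈ G, (g : Matrix (Fin 2) (Fin 2) ℂ) ≠ -1)
    (A B C : Matrix.SpecialLinearGroup (Fin 2) ℂ)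
    (hB : B ∈ G)
    (hB1 : B ≠ 1)
    (hAB : A * B = B * A) (hBC : B * C = C * B) :
    A * C = C * A :=
  Matrix.SpecialLinearGroup.commute_trans_of_ne_one_of_ne_neg_one hB1 (hG B hB) hAB hBC

theorem subgroup_SL2_no_negI_commutative_transitive
    (G : Subgroup (Matrix.SpecialLinearGroup (Fin 2) ℂ))
    (hG : ∀ g ∈ G, (g : Matrix (Fin 2) (Fin 2) ℂ) ≠ -1)
    (A B C : Matrix.SpecialLinearGroup (Fin 2) ℂ)
    (hA : A ∈ G) (hB : B ∈ G) (hC : C ∈ G)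
    (hA1 : A ≠ 1) (hB1 : B ≠ 1) (hC1 : C ≠ 1)
    (hAB : A * B = B * A) (hBC : B * C = C * B) :
    A * C = C * A :=
  subgroup_SL2_no_negI_commutative_transitive_general G hG A B C hB hB1 hAB hBC
end

section
/- Let G be a subgroup of SL(2,C) with -I not in G, and let D be the subgroup of diagonal matrices in G. Then D is malnormal in G: for any g in G - D, g D g^{-1} ∩ D = {I}. -/
/-!
If `g d₁ g⁻¹ = d₂` with `d₁, d₂` diagonal, then `g d₁ = d₂ g` reads entrywise
`g i j * d₁ j j = d₂ i i * g i j`. When `d₂` is scalar it is `±1` and `-1 ∉ G`. Otherwise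
`d₂` has distinct diagonal entries, so every column of `g` contains a zero; as `g` has
determinant `1` and is not diagonal, it is antidiagonal, whence `g² = -1 ∈ G`, a contradiction.
-/

namespace Matrix

theorem IsDiag.apply_eq_zero_or_diag_eq {n R : Type*} [Fintype n] [DecidableEq n] [CommRing R]
    [NoZeroDivisors R] {A B g : Matrix n n R} (hA : A.IsDiag) (hB : B.IsDiag)
    (h : g * A = B * g) (i j : n) : g i j = 0 ∨ A j j = B i i := by
  have hij := congrFun (congrFun h i) j
  rw [← (isDiag_iff_diagonal_diag A).1 hA, ← (isDiag_iff_diagonal_diag B).1 hB, mul_diagonal,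
    diagonal_mul, mul_comm (B.diag i)] at hij
  exact (mul_eq_mul_left_iff.1 hij).symm

namespace SpecialLinearGroup

variable {R : Type*} [CommRing R]

theorem diag_eq_zero_of_zero_in_each_column [Nontrivial R] (g : SpecialLinearGroup (Fin 2) R)
    (hcol : ∀ j, g 0 j = 0 ∨ g 1 j = 0) (hg : ¬ (g : Matrix (Fin 2) (Fin 2) R).IsDiag) :
    g 0 0 = 0 ∧ g 1 1 = 0 := by
  have hdet := g.det_coe
  rw [det_fin_two] at hdet
  have hoff : g 0 1 ≠ 0 ∨ g 1 0 ≠ 0 := by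
    contrapose! hg
    intro i j hij
    fin_cases i <;> fin_cases j <;> simp_all
  rcases hcol 0 with h₀ | h₀ <;> rcases hcol 1 with h₁ | h₁ <;> simp_all

theorem mul_self_eq_neg_one_of_diag_eq_zero (g : SpecialLinearGroup (Fin 2) R)
    (h₀₀ : g 0 0 = 0) (h₁₁ : g 1 1 = 0) : (g : Matrix (Fin 2) (Fin 2) R) * g = -1 := by
  have hdet := g.det_coe
  rw [det_fin_two, h₀₀, h₁₁] at hdet
  ext i j
  fin_cases i <;> fin_cases j <;> simp [mul_apply, h₀₀, h₁₁] <;> linear_combination -hdet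

theorem eq_one_or_eq_neg_one_of_isDiag [IsDomain R] {d : SpecialLinearGroup (Fin 2) R}
    (hd : (d : Matrix (Fin 2) (Fin 2) R).IsDiag) (hscalar : d 0 0 = d 1 1) :
    d = 1 ∨ (d : Matrix (Fin 2) (Fin 2) R) = -1 := by
  obtain ⟨h₀₁, h₁₀⟩ : d 0 1 = 0 ∧ d 1 0 = 0 := ⟨hd (by decide), hd (by decide)⟩
  have hdet := d.det_coe
  rw [det_fin_two, h₀₁, ← hscalar, zero_mul, sub_zero] at hdet
  rcases mul_self_eq_one_iff.1 hdet with h | h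
  · left
    ext i j
    fin_cases i <;> fin_cases j <;> simp [h, ← hscalar, h₀₁, h₁₀]
  · right
    ext i j
    fin_cases i <;> fin_cases j <;> simp [h, ← hscalar, h₀₁, h₁₀]

end SpecialLinearGroup

end Matrix

open Matrix.SpecialLinearGroup in
theorem diagonal_subgroup_malnormal
    (G : Subgroup (Matrix.SpecialLinearGroup (Fin 2) ℂ))
    (hG : ∀ g ∈ G, (g : Matrix (Fin 2) (Fin 2) ℂ) ≠ -1)
    (g : Matrix.SpecialLinearGroup (Fin 2) ℂ) (hg : g ∈ G)
    (hgD : ¬ (g : Matrix (Fin 2) (Fin 2) ℂ).IsDiag) :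
    ∀ d₁ d₂ : Matrix.SpecialLinearGroup (Fin 2) ℂ, d₁ ∈ G → d₂ ∈ G →
      (d₁ : Matrix (Fin 2) (Fin 2) ℂ).IsDiag →
      (d₂ : Matrix (Fin 2) (Fin 2) ℂ).IsDiag →
      g * d₁ * g⁻¹ = d₂ → d₂ = 1 := by
  intro d₁ d₂ _ hd₂G hd₁ hd₂ hconj
  by_cases hscalar : d₂ 0 0 = d₂ 1 1
  · exact (eq_one_or_eq_neg_one_of_isDiag hd₂ hscalar).resolve_right (hG d₂ hd₂G)
  exfalso
  have hcomm : (g : Matrix (Fin 2) (Fin 2) ℂ) * d₁ = d₂ * g := by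
    rw [← coe_mul, ← coe_mul, ← hconj, inv_mul_cancel_right]
  have hcol : ∀ j, g 0 j = 0 ∨ g 1 j = 0 := by
    intro j
    by_contra! hne
    apply hscalar
    rw [← (hd₁.apply_eq_zero_or_diag_eq hd₂ hcomm 0 j).resolve_left hne.1,
      (hd₁.apply_eq_zero_or_diag_eq hd₂ hcomm 1 j).resolve_left hne.2]
  obtain ⟨h₀₀, h₁₁⟩ := diag_eq_zero_of_zero_in_each_column g hcol hgD
  exact hG (g * g) (mul_mem hg hg) (by rw [coe_mul, mul_self_eq_neg_one_of_diag_eq_zero g h₀₀ h₁₁])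
end

section
/- Let A be a subgroup of SL(2,C) in which the identity is the only element with trace ±2, and let a = diag(λ, λ^{-1}) be a non-identity diagonal element of A. Then any element x of A that has some zero entry is itself diagonal, and hence commutes with a. -/
/-!
Write `a = diag(μ, ν)` and `x = !![p, b; c, d]` in `SL(2)`. Then
`tr (x a x⁻¹ a⁻¹) = 2 - b c (μ - ν)²` and `tr (x a x⁻¹ a) = 2 + p d (μ - ν)²`, while `μ ≠ ν` because
`μ = ν = ±1` would give `a` trace `±2`. If `b c = 0`, the commutator has trace `2`, hence is trivial,
and an element commuting with `a` is diagonal. If `p d = 0`, then `x a x⁻¹ = a⁻¹`, which forces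
`p = d = 0`; but then `x² = -1` has trace `-2`, so `x² = 1` and `-1 = 1`.
-/

open Matrix
open scoped MatrixGroups commutatorElement

namespace Matrix

variable {R : Type*} [CommRing R]

theorem trace_mul_diag_mul_adjugate_mul_diag_swap_fin_two (M : Matrix (Fin 2) (Fin 2) R)
    (μ ν : R) :
    trace (M * !![μ, 0; 0, ν] * adjugate M * !![ν, 0; 0, μ]) =
      2 * M.det * (μ * ν) - M 0 1 * M 1 0 * (μ - ν) ^ 2 := by
  conv_lhs => rw [eta_fin_two M]
  rw [det_fin_two, adjugate_fin_two_of, mul_fin_two, mul_fin_two, mul_fin_two, trace_fin_two_of]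
  ring

theorem trace_mul_diag_mul_adjugate_mul_diag_fin_two (M : Matrix (Fin 2) (Fin 2) R) (μ ν : R) :
    trace (M * !![μ, 0; 0, ν] * adjugate M * !![μ, 0; 0, ν]) =
      2 * M.det * (μ * ν) + M 0 0 * M 1 1 * (μ - ν) ^ 2 := by
  conv_lhs => rw [eta_fin_two M]
  rw [det_fin_two, adjugate_fin_two_of, mul_fin_two, mul_fin_two, mul_fin_two, trace_fin_two_of]
  ring

theorem apply_eq_zero_of_diagonal_mul_eq_mul_diagonal {n : Type*} [Fintype n] [DecidableEq n]
    [NoZeroDivisors R] {d e : n → R} {M : Matrix n n R} (h : diagonal d * M = M * diagonal e)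
    {i j : n} (hij : d i ≠ e j) : M i j = 0 := by
  have hM := congrFun (congrFun h i) j
  rw [diagonal_mul, mul_diagonal] at hM
  have : M i j * (d i - e j) = 0 := by linear_combination hM
  exact (mul_eq_zero.mp this).resolve_right (sub_ne_zero.mpr hij)

end Matrix

namespace Matrix.SpecialLinearGroup

variable {R : Type*} [CommRing R] {a x : SL(2, R)} {μ ν : R}

theorem mul_eq_one_of_coe_eq_diag (ha : (a : Matrix (Fin 2) (Fin 2) R) = !![μ, 0; 0, ν]) :
    μ * ν = 1 := by
  simpa [ha, det_fin_two_of] using a.det_coe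

theorem coe_inv_of_coe_eq_diag (ha : (a : Matrix (Fin 2) (Fin 2) R) = !![μ, 0; 0, ν]) :
    ((a⁻¹ : SL(2, R)) : Matrix (Fin 2) (Fin 2) R) = !![ν, 0; 0, μ] := by
  rw [coe_inv, ha, adjugate_fin_two_of, neg_zero]

theorem trace_commutatorElement_of_coe_eq_diag
    (ha : (a : Matrix (Fin 2) (Fin 2) R) = !![μ, 0; 0, ν]) (x : SL(2, R)) :
    trace ((⁅x, a⁆ : SL(2, R)) : Matrix (Fin 2) (Fin 2) R) = 2 - x 0 1 * x 1 0 * (μ - ν) ^ 2 := by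
  rw [commutatorElement_def, coe_mul, coe_mul, coe_mul, coe_inv_of_coe_eq_diag ha, coe_inv, ha,
    trace_mul_diag_mul_adjugate_mul_diag_swap_fin_two, x.det_coe, mul_eq_one_of_coe_eq_diag ha,
    mul_one, mul_one]

theorem trace_mul_mul_inv_mul_of_coe_eq_diag
    (ha : (a : Matrix (Fin 2) (Fin 2) R) = !![μ, 0; 0, ν]) (x : SL(2, R)) :
    trace ((x * a * x⁻¹ * a : SL(2, R)) : Matrix (Fin 2) (Fin 2) R) =
      2 + x 0 0 * x 1 1 * (μ - ν) ^ 2 := by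
  rw [coe_mul, coe_mul, coe_mul, coe_inv, ha, trace_mul_diag_mul_adjugate_mul_diag_fin_two,
    x.det_coe, mul_eq_one_of_coe_eq_diag ha, mul_one, mul_one]

theorem coe_mul_self_eq_neg_one (h₀ : x 0 0 = 0) (h₁ : x 1 1 = 0) :
    ((x * x : SL(2, R)) : Matrix (Fin 2) (Fin 2) R) = -1 := by
  have hx : x 0 0 * x 1 1 - x 0 1 * x 1 0 = 1 := by rw [← det_fin_two, x.det_coe]
  have hbc : x 0 1 * x 1 0 = -1 := by linear_combination -hx + x 1 1 * h₀
  rw [coe_mul, eta_fin_two (x : Matrix (Fin 2) (Fin 2) R), mul_fin_two, h₀, h₁]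
  simp only [mul_zero, zero_mul, add_zero, zero_add, mul_comm (x 1 0), hbc]
  ext i j
  fin_cases i <;> fin_cases j <;> simp

variable {A : Subgroup SL(2, R)}

theorem commute_of_mem_of_off_diag_mul_eq_zero
    (htr : ∀ g ∈ A, (trace (g : Matrix (Fin 2) (Fin 2) R) = 2 ∨
      trace (g : Matrix (Fin 2) (Fin 2) R) = -2) → g = 1)
    (ha : a ∈ A) (haM : (a : Matrix (Fin 2) (Fin 2) R) = !![μ, 0; 0, ν]) (hx : x ∈ A)
    (h : x 0 1 * x 1 0 = 0) : a * x = x * a := by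
  have hmem : ⁅x, a⁆ ∈ A := by
    rw [commutatorElement_def]
    exact mul_mem (mul_mem (mul_mem hx ha) (inv_mem hx)) (inv_mem ha)
  have hcomm : ⁅x, a⁆ = 1 := htr _ hmem <| Or.inl <| by
    rw [trace_commutatorElement_of_coe_eq_diag haM, h, zero_mul, sub_zero]
  exact (commutatorElement_eq_one_iff_mul_comm.mp hcomm).symm

variable [NoZeroDivisors R]

theorem isDiag_of_commute_of_coe_eq_diag (ha : (a : Matrix (Fin 2) (Fin 2) R) = !![μ, 0; 0, ν])
    (hμν : μ ≠ ν) (h : a * x = x * a) : (x : Matrix (Fin 2) (Fin 2) R).IsDiag := by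
  have hM : diagonal ![μ, ν] * (x : Matrix (Fin 2) (Fin 2) R) = x * diagonal ![μ, ν] := by
    rw [diagonal_vec2, ← ha, ← coe_mul, ← coe_mul, h]
  intro i j hij
  refine apply_eq_zero_of_diagonal_mul_eq_mul_diagonal hM ?_
  fin_cases i <;> fin_cases j <;> simp_all [hμν.symm]

theorem diag_eq_zero_of_mul_eq_inv_mul_of_coe_eq_diag
    (ha : (a : Matrix (Fin 2) (Fin 2) R) = !![μ, 0; 0, ν]) (hμν : μ ≠ ν) (h : x * a = a⁻¹ * x) :
    x 0 0 = 0 ∧ x 1 1 = 0 := by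
  have hM : diagonal ![ν, μ] * (x : Matrix (Fin 2) (Fin 2) R) = x * diagonal ![μ, ν] := by
    rw [diagonal_vec2, diagonal_vec2, ← ha, ← coe_inv_of_coe_eq_diag ha, ← coe_mul, ← coe_mul, h]
  exact ⟨apply_eq_zero_of_diagonal_mul_eq_mul_diagonal hM hμν.symm,
    apply_eq_zero_of_diagonal_mul_eq_mul_diagonal hM hμν⟩

theorem ne_of_mem_of_coe_eq_diag
    (htr : ∀ g ∈ A, (trace (g : Matrix (Fin 2) (Fin 2) R) = 2 ∨
      trace (g : Matrix (Fin 2) (Fin 2) R) = -2) → g = 1)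
    (ha : a ∈ A) (ha1 : a ≠ 1) (haM : (a : Matrix (Fin 2) (Fin 2) R) = !![μ, 0; 0, ν]) :
    μ ≠ ν := by
  rintro rfl
  apply ha1 (htr a ha _)
  rw [haM, trace_fin_two_of]
  rcases mul_self_eq_one_iff.mp (mul_eq_one_of_coe_eq_diag haM) with rfl | rfl
  · exact Or.inl one_add_one_eq_two
  · exact Or.inr (by ring)

theorem diag_mul_ne_zero_of_mem [NeZero (2 : R)]
    (htr : ∀ g ∈ A, (trace (g : Matrix (Fin 2) (Fin 2) R) = 2 ∨
      trace (g : Matrix (Fin 2) (Fin 2) R) = -2) → g = 1)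
    (ha : a ∈ A) (haM : (a : Matrix (Fin 2) (Fin 2) R) = !![μ, 0; 0, ν]) (hμν : μ ≠ ν)
    (hx : x ∈ A) : x 0 0 * x 1 1 ≠ 0 := by
  intro h
  have hconj : x * a * x⁻¹ * a = 1 :=
    htr _ (mul_mem (mul_mem (mul_mem hx ha) (inv_mem hx)) ha) <| Or.inl <| by
      rw [trace_mul_mul_inv_mul_of_coe_eq_diag haM, h, zero_mul, add_zero]
  have hanti : x * a = a⁻¹ * x := by
    rwa [mul_eq_one_iff_eq_inv, mul_inv_eq_iff_eq_mul] at hconj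
  obtain ⟨h₀, h₁⟩ := diag_eq_zero_of_mul_eq_inv_mul_of_coe_eq_diag haM hμν hanti
  have hsq := coe_mul_self_eq_neg_one h₀ h₁
  have hsq_one : x * x = 1 := htr _ (mul_mem hx hx) <| Or.inr <| by
    rw [hsq, trace_neg, trace_one, Fintype.card_fin, Nat.cast_ofNat]
  have h11 : (1 : R) = -1 := by simpa [hsq_one] using congrFun (congrFun hsq 0) 0
  exact two_ne_zero (α := R) (by linear_combination h11)

end Matrix.SpecialLinearGroup

open Matrix.SpecialLinearGroup in
theorem zero_entry_implies_diagonal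
    (A : Subgroup (Matrix.SpecialLinearGroup (Fin 2) ℂ))
    (htr : ∀ g ∈ A, (Matrix.trace (g : Matrix (Fin 2) (Fin 2) ℂ) = 2 ∨
        Matrix.trace (g : Matrix (Fin 2) (Fin 2) ℂ) = -2) → g = 1)
    (a : Matrix.SpecialLinearGroup (Fin 2) ℂ) (ha : a ∈ A) (ha1 : a ≠ 1)
    (lam : ℂ) (haM : (a : Matrix (Fin 2) (Fin 2) ℂ) = !![lam, 0; 0, lam⁻¹])
    (x : Matrix.SpecialLinearGroup (Fin 2) ℂ) (hx : x ∈ A)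
    (hzero : ∃ i j : Fin 2, (x : Matrix (Fin 2) (Fin 2) ℂ) i j = 0) :
    (x : Matrix (Fin 2) (Fin 2) ℂ).IsDiag ∧ a * x = x * a := by
  have hne := ne_of_mem_of_coe_eq_diag htr ha ha1 haM
  have hdiag := diag_mul_ne_zero_of_mem htr ha haM hne hx
  have hoff : x 0 1 * x 1 0 = 0 := by
    obtain ⟨i, j, hij⟩ := hzero
    fin_cases i <;> fin_cases j <;> simp only [Fin.zero_eta, Fin.mk_one] at hij
    · exact (hdiag (by rw [hij, zero_mul])).elim
    · rw [hij, zero_mul]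
    · rw [hij, mul_zero]
    · exact (hdiag (by rw [hij, mul_zero])).elim
  have hcomm := commute_of_mem_of_off_diag_mul_eq_zero htr ha haM hx hoff
  exact ⟨isDiag_of_commute_of_coe_eq_diag haM hne hcomm, hcomm⟩
end

section
/- If G is a subgroup of SL(2,C) such that the only element of G with trace in {-2, 2} is the identity, then G is a CSA group: every maximal abelian subgroup of G is malnormal. -/
/-!
If `x ≠ 1` lies in `G`, then `tr x ≠ ±2`, so `x` has distinct eigenvalues and its commutant in
`M₂(ℂ)` is the commutative algebra `ℂ[x]`. Hence the centralizer of `x` in `G` is abelian, and a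
maximal abelian subgroup `M ∋ x` must equal it. If also `g x g⁻¹ ∈ M`, then `g x g⁻¹` lies in
`ℂ[x]` and has the trace and determinant of `x`, so it is `x` or `x⁻¹ = (tr x) - x`. In the first
case `g ∈ M`; in the second `g x + x g = (tr x) g`, which forces `tr g = 0`, so `g² = -1` by
Cayley–Hamilton, against the trace condition.
-/

open Matrix MatrixGroups

namespace Matrix

variable {R : Type*} [CommRing R]

theorem mul_self_fin_two (A : Matrix (Fin 2) (Fin 2) R) : A * A = A.trace • A - A.det • 1 := by
  ext i j
  fin_cases i <;> fin_cases j <;>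
    simp [mul_apply, trace_fin_two, det_fin_two] <;> ring

theorem mul_add_mul_fin_two (A B : Matrix (Fin 2) (Fin 2) R) :
    A * B + B * A = A.trace • B + B.trace • A + ((A * B).trace - A.trace * B.trace) • 1 := by
  ext i j
  fin_cases i <;> fin_cases j <;>
    simp [mul_apply, trace_fin_two] <;> ring

theorem trace_smul_one_add_smul_fin_two (α β : R) (A : Matrix (Fin 2) (Fin 2) R) :
    (α • 1 + β • A).trace = 2 * α + β * A.trace := by
  simp [trace_fin_two]; ring

theorem det_smul_one_add_smul_fin_two (α β : R) (A : Matrix (Fin 2) (Fin 2) R) :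
    (α • 1 + β • A).det = α ^ 2 + α * β * A.trace + β ^ 2 * A.det := by
  simp [det_fin_two, trace_fin_two]; ring

variable {K : Type*} [Field K] {a b c g : Matrix (Fin 2) (Fin 2) K}

theorem ne_smul_one_of_discr_ne_zero (h : a.discr ≠ 0) (r : K) : a ≠ r • 1 := by
  rintro rfl
  apply h
  simp [discr_fin_two]; ring

theorem exists_eq_smul_one_add_smul_of_commute (ha : ∀ r : K, a ≠ r • 1) (h : Commute a b) :
    ∃ α β : K, b = α • 1 + β • a := by
  have entry (i j : Fin 2) := congrFun (congrFun h.eq i) j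
  simp only [mul_apply, Fin.sum_univ_two] at entry
  have e00 := entry 0 0
  have e01 := entry 0 1
  have e10 := entry 1 0
  by_cases h01 : a 0 1 ≠ 0
  · refine ⟨b 0 0 - b 0 1 / a 0 1 * a 0 0, b 0 1 / a 0 1, ?_⟩
    ext i j
    fin_cases i <;> fin_cases j <;> simp <;> field_simp
    · linear_combination e00
    · linear_combination e01
  by_cases h10 : a 1 0 ≠ 0
  · refine ⟨b 0 0 - b 1 0 / a 1 0 * a 0 0, b 1 0 / a 1 0, ?_⟩
    ext i j
    fin_cases i <;> fin_cases j <;> simp <;> field_simp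
    · linear_combination -e00
    · linear_combination -e10
  push Not at h01 h10
  have hd : a 0 0 - a 1 1 ≠ 0 := by
    intro hd
    apply ha (a 0 0)
    ext i j
    fin_cases i <;> fin_cases j <;> simp [h01, h10]
    linear_combination -hd
  have hb01 : b 0 1 = 0 := by
    refine (mul_eq_zero.mp ?_).resolve_right hd
    linear_combination e01 + (b 0 0 - b 1 1) * h01
  have hb10 : b 1 0 = 0 := by
    refine (mul_eq_zero.mp ?_).resolve_right hd
    linear_combination -e10 + (b 0 0 - b 1 1) * h10
  refine ⟨b 0 0 - (b 0 0 - b 1 1) / (a 0 0 - a 1 1) * a 0 0,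
    (b 0 0 - b 1 1) / (a 0 0 - a 1 1), ?_⟩
  ext i j
  fin_cases i <;> fin_cases j <;> simp [h01, h10, hb01, hb10]
  field_simp
  ring

theorem commute_of_commute_of_commute (ha : ∀ r : K, a ≠ r • 1) (hb : Commute a b)
    (hc : Commute a c) : Commute b c := by
  obtain ⟨α, β, rfl⟩ := exists_eq_smul_one_add_smul_of_commute ha hb
  obtain ⟨γ, δ, rfl⟩ := exists_eq_smul_one_add_smul_of_commute ha hc
  apply Commute.add_left <;> apply Commute.add_right <;> apply Commute.smul_left <;>
    apply Commute.smul_right <;> simp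

theorem eq_or_eq_trace_smul_one_sub_of_commute [NeZero (2 : K)] (ha : a.discr ≠ 0)
    (h : Commute a b) (htr : b.trace = a.trace) (hdet : b.det = a.det) :
    b = a ∨ b = a.trace • 1 - a := by
  obtain ⟨α, β, rfl⟩ := exists_eq_smul_one_add_smul_of_commute (ne_smul_one_of_discr_ne_zero ha) h
  rw [trace_smul_one_add_smul_fin_two] at htr
  rw [det_smul_one_add_smul_fin_two] at hdet
  rw [discr_fin_two] at ha
  have hβ : (β - 1) * (β + 1) = 0 := by
    refine (mul_eq_zero.mp ?_).resolve_right ha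
    linear_combination (2 * α + β * a.trace + a.trace) * htr - 4 * hdet
  rcases mul_eq_zero.mp hβ with hβ | hβ
  · left
    obtain rfl : β = 1 := by linear_combination hβ
    obtain rfl : α = 0 := by simpa [two_ne_zero] using htr
    simp
  · right
    obtain rfl : β = -1 := by linear_combination hβ
    obtain rfl : α = a.trace := by
      apply mul_left_cancel₀ (two_ne_zero (α := K)); linear_combination htr
    simp [sub_eq_add_neg]

theorem trace_eq_zero_of_mul_add_mul_eq (ha : ∀ r : K, a ≠ r • 1)
    (h : g * a + a * g = a.trace • g) : g.trace = 0 := by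
  by_contra hg
  rw [mul_add_mul_fin_two, add_comm (g.trace • a), add_assoc, add_eq_left] at h
  set s := (g * a).trace - g.trace * a.trace
  apply ha (-s / g.trace)
  refine smul_right_injective _ hg ?_
  simp only [smul_smul, mul_div_cancel₀ _ hg, neg_smul]
  exact eq_neg_of_add_eq_zero_left h

namespace SpecialLinearGroup

variable {K : Type*} [Field K]

local notation:1024 "↑ₘ" A:1024 => ((A : SL(2, K)) : Matrix (Fin 2) (Fin 2) K)

theorem discr_coe_fin_two (x : SL(2, K)) : (↑ₘx).discr = (↑ₘx).trace ^ 2 - 4 := by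
  rw [discr_fin_two, x.2, mul_one]

theorem commute_of_commute_of_commute {x y z : SL(2, K)} (hx : ∀ r : K, ↑ₘx ≠ r • 1)
    (hy : Commute x y) (hz : Commute x z) : Commute y z :=
  (Matrix.commute_of_commute_of_commute hx (hy.map coeMonoidHom) (hz.map coeMonoidHom)).of_map
    coeMonoidHom_injective

theorem isMulCommutative_centralizer_singleton {G : Subgroup SL(2, K)} {x : G}
    (hx : ∀ r : K, ↑ₘ(x : SL(2, K)) ≠ r • 1) : IsMulCommutative (Subgroup.centralizer {x}) :=
  ⟨⟨fun u v => Subtype.ext <| Subtype.ext <| (commute_of_commute_of_commute hx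
    ((Commute.symm (Subgroup.mem_centralizer_singleton_iff.mp u.2)).map G.subtype)
    ((Commute.symm (Subgroup.mem_centralizer_singleton_iff.mp v.2)).map G.subtype)).eq⟩⟩

theorem commute_or_mul_self_eq_neg_one [NeZero (2 : K)] {g x : SL(2, K)} (hx : (↑ₘx).discr ≠ 0)
    (h : Commute (g * x * g⁻¹) x) : Commute g x ∨ ↑ₘ(g * g) = -1 := by
  have hinv : ↑ₘg⁻¹ * ↑ₘg = 1 := by rw [← coe_mul, inv_mul_cancel, coe_one]
  have htr : (↑ₘ(g * x * g⁻¹)).trace = (↑ₘx).trace := by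
    rw [coe_mul, coe_mul, trace_mul_cycle, hinv, one_mul]
  have hdet : (↑ₘ(g * x * g⁻¹)).det = (↑ₘx).det := by
    rw [(g * x * g⁻¹).2, x.2]
  rcases eq_or_eq_trace_smul_one_sub_of_commute hx (h.map coeMonoidHom).symm htr hdet with
    hfix | hswap
  · left
    exact mul_inv_eq_iff_eq_mul.mp (coeMonoidHom_injective hfix)
  · right
    have hanti : ↑ₘg * ↑ₘx + ↑ₘx * ↑ₘg = (↑ₘx).trace • ↑ₘg := by
      have := congrArg (· * ↑ₘg) hswap
      simp only [coeMonoidHom_apply, coe_mul, mul_assoc, hinv, mul_one, sub_mul, smul_mul_assoc,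
        one_mul] at this
      rw [this, sub_add_cancel]
    have hg := trace_eq_zero_of_mul_add_mul_eq (ne_smul_one_of_discr_ne_zero hx) hanti
    rw [coe_mul, mul_self_fin_two, hg, g.2, zero_smul, one_smul, zero_sub]

end SpecialLinearGroup

end Matrix

theorem Subgroup.eq_centralizer_of_maximal_isMulCommutative {G : Type*} [Group G]
    {M : Subgroup G} [IsMulCommutative M]
    (hM : ∀ N : Subgroup G, IsMulCommutative N → M ≤ N → M = N) {x : G} (hx : x ∈ M)
    (hC : IsMulCommutative (centralizer {x})) : M = centralizer {x} :=
  hM _ hC <| (le_centralizer_iff_isMulCommutative.mpr ‹_›).trans <|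
    centralizer_le (Set.singleton_subset_iff.mpr hx)

theorem trace_condition_implies_csa
    (G : Subgroup (Matrix.SpecialLinearGroup (Fin 2) ℂ))
    (htr : ∀ g ∈ G, (Matrix.trace (g : Matrix (Fin 2) (Fin 2) ℂ) = 2 ∨
        Matrix.trace (g : Matrix (Fin 2) (Fin 2) ℂ) = -2) → g = 1) :
    ∀ M : Subgroup G,
      (IsMulCommutative M ∧ ∀ N : Subgroup G, IsMulCommutative N → M ≤ N → M = N) →
      ∀ g : G, g ∉ M → ∀ x ∈ M, g * x * g⁻¹ ∈ M → x = 1 := by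
  rintro M ⟨hMcomm, hMmax⟩ g hg x hx hgx
  by_contra hx1
  have hdisc : ((x : SL(2, ℂ)) : Matrix (Fin 2) (Fin 2) ℂ).discr ≠ 0 := by
    rw [SpecialLinearGroup.discr_coe_fin_two, sub_ne_zero]
    refine fun h => hx1 (Subtype.ext (htr _ x.2 (sq_eq_sq_iff_eq_or_eq_neg.mp ?_)))
    linear_combination h
  have hMC := Subgroup.eq_centralizer_of_maximal_isMulCommutative hMmax hx
    (SpecialLinearGroup.isMulCommutative_centralizer_singleton (ne_smul_one_of_discr_ne_zero hdisc))
  rcases SpecialLinearGroup.commute_or_mul_self_eq_neg_one hdisc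
      ((show Commute _ _ from setLike_mul_comm hgx hx).map G.subtype) with hcomm | hsq
  · exact hg (hMC ▸ Subgroup.mem_centralizer_singleton_iff.mpr (Subtype.ext hcomm.eq))
  · have hone := htr _ (g * g).2 (Or.inr (by simp [hsq]))
    rw [← Subgroup.coe_mul, hone] at hsq
    exact absurd (congrFun (congrFun hsq 0) 0) (by norm_num)
end

section
/- Let G1 and G2 be groups in which the centralizer of every non-trivial element is infinite cyclic, let a in G1 and b in G2 be elements generating their own centralizers, and form G = G1 *_{a=b} G2. Then any element of G1 that generates its own centralizer in G1 also generates its own centralizer in G. -/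
/-!
Let `A` be the amalgamated cyclic subgroup. In each factor `A` is malnormal: if `v` conjugates a
nontrivial element of `⟨a⟩` into `⟨a⟩`, then `v` normalizes `⟨a⟩`, so `v²` centralizes `a`, and
since centralizers are cyclic and the group is torsion-free this forces `v ∈ ⟨a⟩`.

Let `x` commute with `g` and write `x = h w` with `h ∈ A` and `w` a reduced word. If `g` is
conjugate in `G 0` into `A` we may assume `g ∈ A`; conjugating `g` by `w = w' v` gives the word
`w' (v g v⁻¹) w'⁻¹`, reduced by malnormality, hence outside `A` unless `w` is empty. Otherwise
conjugating `g` by `w` gives a reduced word of length greater than one unless `w` is a single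
letter of `G 0`. Either way `x ∈ G 0`, where the centralizer of `g` is `⟨g⟩`.
-/

open Subgroup Function

section CyclicCentralizers

variable {K : Type*} [Group K]

variable (K) in
def HasInfiniteCyclicCentralizers : Prop :=
  ∀ x : K, x ≠ 1 → ∃ y : K, ¬ IsOfFinOrder y ∧ centralizer {x} = zpowers y

def IsMalnormal (S : Subgroup K) : Prop :=
  ∀ x ∈ S, x ≠ 1 → ∀ v ∉ S, v * x * v⁻¹ ∉ S

theorem injective_zpowersHom {a : K} (ha : ¬IsOfFinOrder a) : Injective (zpowersHom K a) :=
  (injective_zpow_iff_not_isOfFinOrder.2 ha).comp Multiplicative.toAdd.injective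

theorem commute_of_mem_zpowers {a x : K} (hx : x ∈ zpowers a) : Commute x a := by
  obtain ⟨n, rfl⟩ := hx
  exact (Commute.refl a).zpow_left n

theorem ne_one_of_centralizer_eq_zpowers {g x : K} (hg : centralizer {g} = zpowers g)
    (hx : x ≠ 1) : g ≠ 1 := by
  rintro rfl
  have : x ∈ zpowers (1 : K) := hg ▸ mem_centralizer_singleton_iff.2 (by simp)
  rw [zpowers_one_eq_bot, mem_bot] at this
  exact hx this

theorem centralizer_apply_eq_zpowers {K' : Type*} [Group K'] (f : K →* K') (hf : Injective f)
    {g : K} (hg : centralizer {g} = zpowers g) (hle : centralizer {f g} ≤ f.range) :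
    centralizer {f g} = zpowers (f g) := by
  refine le_antisymm (fun x hx => ?_) (zpowers_le.2 (mem_centralizer_singleton_iff.2 rfl))
  obtain ⟨p, rfl⟩ := hle hx
  have hp : p ∈ centralizer {g} := by
    rw [mem_centralizer_singleton_iff] at hx ⊢
    exact hf (by simpa using hx)
  rw [hg] at hp
  obtain ⟨n, rfl⟩ := hp
  exact ⟨n, (map_zpow f g n).symm⟩

theorem centralizer_conj_eq_zpowers_iff {g : K} (u : K) :
    centralizer {u * g * u⁻¹} = zpowers (u * g * u⁻¹) ↔ centralizer {g} = zpowers g := by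
  have key (u g : K) (hg : centralizer {g} = zpowers g) :
      centralizer {u * g * u⁻¹} = zpowers (u * g * u⁻¹) :=
    centralizer_apply_eq_zpowers (MulAut.conj u).toMonoidHom (MulAut.conj u).injective hg
      fun x _ => ⟨(MulAut.conj u).symm x, by simp [mul_assoc]⟩
  exact ⟨fun h => by simpa [mul_assoc] using key u⁻¹ _ h, key u g⟩

theorem conj_eq_of_mul_mem_centralizer {c p z : K}
    (h : c * p ∈ centralizer {z}) : p * z * p⁻¹ = c⁻¹ * z * c := by
  rw [mem_centralizer_singleton_iff] at h
  calc p * z * p⁻¹ = c⁻¹ * (c * p * z) * p⁻¹ := by group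
    _ = c⁻¹ * z * c := by rw [h]; group

theorem sq_mem_centralizer_of_conj_mem_zpowers {a v : K} (ha : ¬IsOfFinOrder a)
    (h₁ : v * a * v⁻¹ ∈ zpowers a) (h₂ : v⁻¹ * a * v ∈ zpowers a) : v ^ 2 ∈ centralizer {a} := by
  obtain ⟨p, hp : a ^ p = v * a * v⁻¹⟩ := h₁
  obtain ⟨q, hq : a ^ q = v⁻¹ * a * v⟩ := h₂
  have hqp : q * p = 1 := by
    refine injective_zpow_iff_not_isOfFinOrder.2 ha ?_
    calc a ^ (q * p) = (v⁻¹ * a * v⁻¹⁻¹) ^ p := by rw [zpow_mul, hq, inv_inv]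
      _ = v⁻¹ * a ^ p * v := by rw [conj_zpow, inv_inv]
      _ = a ^ (1 : ℤ) := by rw [hp]; group
  have hpp : p * p = 1 := by
    rcases Int.eq_one_or_neg_one_of_mul_eq_one (mul_comm q p ▸ hqp) with rfl | rfl <;> rfl
  rw [mem_centralizer_singleton_iff]
  calc v ^ 2 * a = v * (v * a * v⁻¹) * v⁻¹ * v ^ 2 := by rw [sq]; group
    _ = a ^ (p * p) * v ^ 2 := by rw [← hp, ← conj_zpow, ← hp, ← zpow_mul]
    _ = a * v ^ 2 := by rw [hpp, zpow_one]

namespace HasInfiniteCyclicCentralizers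

variable (hK : HasInfiniteCyclicCentralizers K)
include hK

theorem eq_one_of_pow_eq_one {v : K} {n : ℕ} (hn : n ≠ 0) (hv : v ^ n = 1) : v = 1 := by
  by_contra hv1
  obtain ⟨y, hy, hc⟩ := hK v hv1
  obtain ⟨t, rfl⟩ : v ∈ zpowers y := hc ▸ mem_centralizer_singleton_iff.2 rfl
  have ht : t * n = 0 :=
    injective_zpow_iff_not_isOfFinOrder.2 hy (by simpa [zpow_mul] using hv)
  simp [(mul_eq_zero.1 ht).resolve_right (by exact_mod_cast hn)] at hv1

theorem centralizer_eq_zpowers {a x : K} (hap : centralizer {a} = zpowers a)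
    (hx : x ∈ zpowers a) (hx1 : x ≠ 1) : centralizer {x} = zpowers a := by
  obtain ⟨y, -, hy⟩ := hK x hx1
  have hxa := commute_of_mem_zpowers hx
  have hay : a ∈ zpowers y := hy ▸ mem_centralizer_singleton_iff.2 hxa.eq.symm
  have hya : y ∈ zpowers a :=
    hap ▸ mem_centralizer_singleton_iff.2 (commute_of_mem_zpowers hay).eq.symm
  exact le_antisymm (hy ▸ zpowers_le.2 hya)
    (zpowers_le.2 (mem_centralizer_singleton_iff.2 hxa.eq.symm))

theorem conj_mem_zpowers {a x v : K} (hap : centralizer {a} = zpowers a) (hx : x ∈ zpowers a)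
    (hz : v * x * v⁻¹ ∈ zpowers a) (hz1 : v * x * v⁻¹ ≠ 1) : v * a * v⁻¹ ∈ zpowers a := by
  rw [← hK.centralizer_eq_zpowers hap hz hz1, mem_centralizer_singleton_iff]
  exact ((commute_of_mem_zpowers hx).conj v).eq.symm

theorem mem_zpowers_of_sq_mem {a v : K} (hap : centralizer {a} = zpowers a)
    (hv : v ^ 2 ∈ zpowers a) : v ∈ zpowers a := by
  by_cases h1 : v ^ 2 = 1
  · rw [hK.eq_one_of_pow_eq_one two_ne_zero h1]
    exact one_mem _
  · rw [← hK.centralizer_eq_zpowers hap hv h1, mem_centralizer_singleton_iff]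
    exact (Commute.self_pow v 2).eq

theorem isMalnormal_zpowers {a : K} (ha : ¬IsOfFinOrder a) (hap : centralizer {a} = zpowers a) :
    IsMalnormal (zpowers a) := by
  intro x hx hx1 v hv hz
  have hz1 : v * x * v⁻¹ ≠ 1 := conj_eq_one_iff.not.2 hx1
  refine hv (hK.mem_zpowers_of_sq_mem hap (hap ▸ sq_mem_centralizer_of_conj_mem_zpowers ha
    (hK.conj_mem_zpowers hap hx hz hz1) ?_))
  simpa using hK.conj_mem_zpowers hap hz (v := v⁻¹) (by simpa [mul_assoc] using hx)
    (by simpa [mul_assoc] using hx1)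

end HasInfiniteCyclicCentralizers

end CyclicCentralizers

namespace Monoid.PushoutI

variable {ι : Type*} {G : ι → Type*} [∀ i, Group (G i)] {H : Type*} [Group H]
  {φ : ∀ i, H →* G i}

variable (φ) in
def listProd (L : List (Σ i, G i)) : PushoutI φ :=
  (L.map fun l => of l.1 l.2).prod

def listInv (L : List (Σ i, G i)) : List (Σ i, G i) :=
  L.reverse.map fun l => ⟨l.1, l.2⁻¹⟩

variable (φ) in
/-- Mathlib's `Reduced` condition on `CoprodI.Word`, stated for bare lists so that reduced words
can be assembled by concatenation. -/
structure ReducedList (L : List (Σ i, G i)) : Prop where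
  isChain_ne : L.IsChain fun l l' => l.1 ≠ l'.1
  not_mem_range : ∀ l ∈ L, l.2 ∉ (φ l.1).range

@[simp] theorem listProd_nil : listProd φ ([] : List (Σ i, G i)) = 1 := rfl

@[simp] theorem listProd_cons (l : Σ i, G i) (L : List (Σ i, G i)) :
    listProd φ (l :: L) = of l.1 l.2 * listProd φ L := by
  simp [listProd]

@[simp] theorem listProd_append (L M : List (Σ i, G i)) :
    listProd φ (L ++ M) = listProd φ L * listProd φ M := by
  simp [listProd]

@[simp] theorem listProd_listInv (L : List (Σ i, G i)) :
    listProd φ (listInv L) = (listProd φ L)⁻¹ := by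
  induction L with
  | nil => rfl
  | cons l L ih => simp [listInv, ← ih]

@[simp] theorem length_listInv (L : List (Σ i, G i)) : (listInv L).length = L.length := by
  simp [listInv]

theorem listProd_append_cons_listInv (L : List (Σ i, G i)) {i : ι} (m : G i) :
    listProd φ (L ++ ⟨i, m⟩ :: listInv L) = listProd φ L * of i m * (listProd φ L)⁻¹ := by
  simp [mul_assoc]

theorem ofCoprodI_prod_eq_listProd (w : CoprodI.Word G) :
    ofCoprodI (φ := φ) w.prod = listProd φ w.toList := by
  simp [CoprodI.Word.prod, listProd, map_list_prod, Function.comp_def]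

theorem ReducedList.exists_word {L : List (Σ i, G i)} (hL : ReducedList φ L) :
    ∃ w : CoprodI.Word G, w.toList = L ∧ Reduced φ w ∧ ofCoprodI w.prod = listProd φ L := by
  refine ⟨⟨L, fun l hl h1 => hL.not_mem_range l hl (h1 ▸ one_mem _), hL.isChain_ne⟩,
    rfl, hL.not_mem_range, ofCoprodI_prod_eq_listProd _⟩

theorem ReducedList.listProd_not_mem_base_range (hφ : ∀ i, Injective (φ i))
    {L : List (Σ i, G i)} (hL : ReducedList φ L) (hne : L ≠ []) :
    listProd φ L ∉ (base φ).range := by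
  intro hmem
  obtain ⟨w, rfl, hw, hprod⟩ := hL.exists_word
  exact hne (congrArg CoprodI.Word.toList (hw.eq_empty_of_mem_range hφ (hprod ▸ hmem)))

theorem ReducedList.map_fst_eq_of_listProd_eq (hφ : ∀ i, Injective (φ i))
    {L L' : List (Σ i, G i)} (hL : ReducedList φ L) (hL' : ReducedList φ L')
    (h : listProd φ L = listProd φ L') : L.map Sigma.fst = L'.map Sigma.fst := by
  obtain ⟨d⟩ := NormalWord.transversal_nonempty φ hφ
  obtain ⟨w, rfl, hw, hwprod⟩ := hL.exists_word
  obtain ⟨w', rfl, hw', hwprod'⟩ := hL'.exists_word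
  obtain ⟨n, hn, hnw⟩ := hw.exists_normalWord_prod_eq d
  obtain ⟨n', hn', hnw'⟩ := hw'.exists_normalWord_prod_eq d
  have : n = n' := NormalWord.prod_injective (by rw [hn, hn', hwprod, hwprod', h])
  rw [← hnw, ← hnw', this]

theorem ReducedList.of_append_singleton {M : List (Σ i, G i)} {j : ι} {v : G j}
    (hL : ReducedList φ (M ++ [⟨j, v⟩])) :
    ReducedList φ M ∧ (∀ l ∈ M.getLast?, l.1 ≠ j) ∧ v ∉ (φ j).range := by
  obtain ⟨hM, -, hlast⟩ := List.isChain_append.1 hL.isChain_ne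
  exact ⟨⟨hM, fun l hl => hL.not_mem_range l (List.mem_append_left _ hl)⟩,
    fun l hl => hlast l hl _ rfl, hL.not_mem_range ⟨j, v⟩ (by simp)⟩

theorem ReducedList.append_cons_listInv {L : List (Σ i, G i)} (hL : ReducedList φ L) {i : ι}
    {m : G i} (hm : m ∉ (φ i).range) (hlast : ∀ l ∈ L.getLast?, l.1 ≠ i) :
    ReducedList φ (L ++ ⟨i, m⟩ :: listInv L) := by
  refine ⟨List.isChain_append.2 ⟨hL.isChain_ne, List.isChain_cons.2 ⟨?_, ?_⟩, ?_⟩, ?_⟩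
  · intro y hy
    rw [listInv, List.head?_map, List.head?_reverse] at hy
    obtain ⟨l, hl, rfl⟩ := Option.map_eq_some_iff.1 hy
    exact fun h => hlast l hl h.symm
  · rw [listInv, List.isChain_map, List.isChain_reverse]
    exact hL.isChain_ne.imp fun _ _ h => Ne.symm h
  · intro x hx y hy
    cases hy
    exact hlast x hx
  · intro l hl
    rcases List.mem_append.1 hl with hl | hl
    · exact hL.not_mem_range l hl
    obtain rfl | hl := List.mem_cons.1 hl
    · exact hm
    · obtain ⟨l', hl', rfl⟩ := List.mem_map.1 hl
      exact fun hr => hL.not_mem_range l' (List.mem_reverse.1 hl') (inv_mem_iff.1 hr)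

theorem NormalWord.reduced {d : NormalWord.Transversal φ} (w : NormalWord d) :
    Reduced φ w.toWord := by
  intro l hl hr
  have hT := w.normalized l.1 l.2 hl
  have hc := d.compl l.1
  exact w.ne_one l hl (congrArg Subtype.val
    ((hc.equiv_fst_eq_self_of_mem_of_one_mem (d.one_mem _) hr).symm.trans
      (hc.equiv_fst_eq_one_of_mem_of_one_mem (one_mem _) hT)))

theorem exists_eq_base_mul_listProd (hφ : ∀ i, Injective (φ i)) (x : PushoutI φ) :
    ∃ (h : H) (L : List (Σ i, G i)), ReducedList φ L ∧ x = base φ h * listProd φ L := by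
  classical
  obtain ⟨d⟩ := NormalWord.transversal_nonempty φ hφ
  set w : NormalWord d := NormalWord.equiv x
  refine ⟨w.head, w.toList, ⟨w.chain_ne, w.reduced⟩, ?_⟩
  rw [← ofCoprodI_prod_eq_listProd]
  exact (NormalWord.equiv.symm_apply_apply x).symm

theorem centralizer_base_le_base_range (hφ : ∀ i, Injective (φ i))
    (hmal : ∀ i, IsMalnormal (φ i).range) {h : H} (h1 : h ≠ 1) :
    centralizer {base φ h} ≤ (base φ).range := by
  intro x hx
  obtain ⟨c, L, hL, rfl⟩ := exists_eq_base_mul_listProd hφ x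
  rcases List.eq_nil_or_concat' L with rfl | ⟨M, ⟨j, v⟩, rfl⟩
  · simp
  obtain ⟨hM, hlast, hv⟩ := hL.of_append_singleton
  have hconj : v * φ j h * v⁻¹ ∉ (φ j).range :=
    hmal j _ ⟨h, rfl⟩ ((map_ne_one_iff _ (hφ j)).2 h1) v hv
  refine absurd ?_ ((hM.append_cons_listInv hconj hlast).listProd_not_mem_base_range hφ (by simp))
  have hprod : listProd φ (M ++ ⟨j, v * φ j h * v⁻¹⟩ :: listInv M) =
      listProd φ (M ++ [⟨j, v⟩]) * base φ h * (listProd φ (M ++ [⟨j, v⟩]))⁻¹ := by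
    rw [listProd_append_cons_listInv]
    simp only [listProd_append, listProd_cons, listProd_nil, map_mul, map_inv, of_apply_eq_base]
    group
  rw [hprod, conj_eq_of_mul_mem_centralizer hx]
  exact ⟨c⁻¹ * h * c, by simp⟩

theorem centralizer_of_le_of_range (hφ : ∀ i, Injective (φ i)) {i : ι} {g : G i}
    (hg : ∀ u : G i, u * g * u⁻¹ ∉ (φ i).range) :
    centralizer {of (φ := φ) i g} ≤ (of i).range := by
  intro x hx
  obtain ⟨c, L, hL, rfl⟩ := exists_eq_base_mul_listProd hφ x
  have hc : base φ c ∈ (of i).range := ⟨φ i c, of_apply_eq_base φ i c⟩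
  set g' := (φ i c)⁻¹ * g * (φ i c)⁻¹⁻¹
  have hg' : ReducedList φ [⟨i, g'⟩] := ⟨List.isChain_singleton _, by simpa using hg _⟩
  have hconj : listProd φ L * of i g * (listProd φ L)⁻¹ = listProd φ [⟨i, g'⟩] := by
    rw [conj_eq_of_mul_mem_centralizer hx]
    simp [g', of_apply_eq_base]
  rcases List.eq_nil_or_concat' L with rfl | ⟨M, ⟨j, v⟩, rfl⟩
  · simpa using hc
  obtain ⟨hM, hlast, hv⟩ := hL.of_append_singleton
  by_cases hji : j = i
  · subst hji
    have hidx := (hM.append_cons_listInv (hg v) hlast).map_fst_eq_of_listProd_eq hφ hg'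
      (by rw [← hconj, listProd_append_cons_listInv]; simp; group)
    have hlen : M.length + (M.length + 1) = 1 := by simpa using congrArg List.length hidx
    obtain rfl : M = [] := List.length_eq_zero_iff.1 (by omega)
    simpa using mul_mem hc ⟨v, rfl⟩
  · have hconjL := hL.append_cons_listInv (by simpa using hg 1) (by simpa using hji)
    have hidx := hconjL.map_fst_eq_of_listProd_eq hφ hg'
      (by rw [listProd_append_cons_listInv, hconj])
    have hlen : M.length + (M.length + 1 + 1 + 1) = 1 := by simpa using congrArg List.length hidx
    omega

end Monoid.PushoutI

open Monoid.PushoutI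

theorem primitive_in_amalgam (G : Fin 2 → Type*) [∀ i, Group (G i)]
    (hcent : ∀ i, ∀ x : G i, x ≠ 1 → ∃ y : G i, ¬ IsOfFinOrder y ∧
        Subgroup.centralizer {x} = Subgroup.zpowers y)
    (a : G 0) (b : G 1)
    (ha : ¬ IsOfFinOrder a) (hap : Subgroup.centralizer {a} = Subgroup.zpowers a)
    (hb : ¬ IsOfFinOrder b) (hbp : Subgroup.centralizer {b} = Subgroup.zpowers b)
    (φ : ∀ i, Multiplicative ℤ →* G i)
    (hφ0 : φ 0 = zpowersHom (G 0) a) (hφ1 : φ 1 = zpowersHom (G 1) b)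
    (g : G 0) (hg : Subgroup.centralizer {g} = Subgroup.zpowers g) :
    Subgroup.centralizer {Monoid.PushoutI.of (φ := φ) 0 g} =
      Subgroup.zpowers (Monoid.PushoutI.of (φ := φ) 0 g) := by
  have hφ : ∀ i, Injective (φ i) := Fin.forall_fin_two.2
    ⟨hφ0 ▸ injective_zpowersHom ha, hφ1 ▸ injective_zpowersHom hb⟩
  have hmal : ∀ i, IsMalnormal (φ i).range := Fin.forall_fin_two.2
    ⟨hφ0 ▸ HasInfiniteCyclicCentralizers.isMalnormal_zpowers (hcent 0) ha hap,
      hφ1 ▸ HasInfiniteCyclicCentralizers.isMalnormal_zpowers (hcent 1) hb hbp⟩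
  have hg1 : g ≠ 1 := ne_one_of_centralizer_eq_zpowers hg (x := a) fun h => ha (h ▸ .one)
  obtain ⟨u, hu⟩ : ∃ u : G 0, centralizer {of (φ := φ) 0 (u * g * u⁻¹)} ≤ (of 0).range := by
    by_cases hconj : ∃ u : G 0, u * g * u⁻¹ ∈ (φ 0).range
    · obtain ⟨u, h, hh⟩ := hconj
      refine ⟨u, ?_⟩
      rw [← hh, of_apply_eq_base]
      refine (centralizer_base_le_base_range hφ hmal ?_).trans ?_
      · rintro rfl
        exact hg1 (by simpa using hh.symm)
      · rintro _ ⟨h, rfl⟩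
        exact ⟨φ 0 h, of_apply_eq_base φ 0 h⟩
    · exact ⟨1, by simpa using centralizer_of_le_of_range hφ (not_exists.1 hconj)⟩
  have hprim := centralizer_apply_eq_zpowers (of (φ := φ) 0) (of_injective hφ 0)
    ((centralizer_conj_eq_zpowers_iff u).2 hg) hu
  rw [map_mul, map_mul, map_inv] at hprim
  exact (centralizer_conj_eq_zpowers_iff _).1 hprim
end

section
/- Let α in GL(2,Z) be a matrix none of whose powers fixes a non-zero vector of Z^2 (equivalently, no eigenvalue is a root of unity). Then the semidirect product Z^2 ⋊_α Z embeds in SL(2,C): there exist x, μ in C with the matrices a = [[1,1],[0,1]], b = [[1,x],[0,1]], t = diag(μ, μ^{-1}) satisfying t a t^{-1} = a^i b^j and t b t^{-1} = a^k b^l (where α = [[i,j],[k,l]]), and the map sending the standard generators to a, b, t is injective. -/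
/-!
Over `ℂ`, `α` has an eigenvector `(1, x)` with eigenvalue `λ = μ²`. It cannot have `α₀₁ = 0`,
because then `α²` fixes `(0, 1)`. Conjugating by `t = diag(μ, μ⁻¹)` multiplies the corner of a
unipotent matrix by `λ`, and this gives both relations. A relation `aᵖ bᑫ tʳ = 1` forces
`μʳ = 1` and `p + q x = 0`. No power of `α` fixes a nonzero integer vector, so `λ` is not a root
of unity, and therefore `r = 0`. A rational eigenvalue of a unimodular integer matrix is an
integer dividing `det α = ±1`, so `λ`, and with it `x`, is irrational. Hence `p = q = 0`.
-/

open Matrix Polynomial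

namespace Matrix

variable {n R K : Type*} [Fintype n] [DecidableEq n]

-- The paper's "hyperbolic"; Mathlib's `Matrix.IsHyperbolic` is a different notion.
def HasNoPeriodicVector [CommRing R] (A : Matrix n n R) : Prop :=
  ∀ k : ℕ, 0 < k → ∀ v : n → R, (A ^ k) *ᵥ v = v → v = 0

theorem pow_mulVec_eq_pow_smul [CommRing R] {M : Matrix n n R} {v : n → R} {l : R}
    (h : M *ᵥ v = l • v) (k : ℕ) : (M ^ k) *ᵥ v = l ^ k • v := by
  induction k with
  | zero => simp
  | succ k ih => rw [pow_succ', ← mulVec_mulVec, ih, mulVec_smul, h, smul_smul, pow_succ]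

section Map

variable [CommRing R] [Field K] [Algebra R K]

theorem det_eq_zero_of_map_mulVec_eq_zero [FaithfulSMul R K] {M : Matrix n n R} {v : n → K}
    (hv : v ≠ 0) (h : M.map (algebraMap R K) *ᵥ v = 0) : M.det = 0 := by
  apply FaithfulSMul.algebraMap_injective R K
  rw [RingHom.map_det, map_zero]
  exact exists_mulVec_eq_zero_iff.mp ⟨v, hv, h⟩

theorem ne_zero_of_map_mulVec_eq_smul [Nontrivial R] [FaithfulSMul R K] {A : Matrix n n R}
    (hdet : IsUnit A.det) {v : n → K} {l : K} (hv : v ≠ 0)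
    (h : A.map (algebraMap R K) *ᵥ v = l • v) : l ≠ 0 := by
  rintro rfl
  exact hdet.ne_zero (det_eq_zero_of_map_mulVec_eq_zero hv (by rw [h, zero_smul]))

theorem aeval_charpoly_eq_zero_of_map_mulVec_eq_smul {M : Matrix n n R} {v : n → K} {l : K}
    (hv : v ≠ 0) (h : M.map (algebraMap R K) *ᵥ v = l • v) : aeval l M.charpoly = 0 := by
  rw [aeval_def, eval₂_eq_eval_map, ← charpoly_map, eval_charpoly]
  refine exists_mulVec_eq_zero_iff.mp ⟨v, hv, ?_⟩
  rw [sub_mulVec, h, scalar_apply, ← smul_one_eq_diagonal, smul_mulVec, one_mulVec, sub_self]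

theorem HasNoPeriodicVector.pow_ne_one_of_map_mulVec_eq_smul [IsDomain R] [FaithfulSMul R K]
    {A : Matrix n n R} (hA : A.HasNoPeriodicVector) {v : n → K} {l : K} (hv : v ≠ 0)
    (h : A.map (algebraMap R K) *ᵥ v = l • v) {k : ℕ} (hk : 0 < k) : l ^ k ≠ 1 := by
  intro hl
  have hdet : (A ^ k - 1).det = 0 := by
    refine det_eq_zero_of_map_mulVec_eq_zero hv ?_
    rw [← RingHom.mapMatrix_apply, map_sub, map_pow, map_one, RingHom.mapMatrix_apply,
      sub_mulVec, pow_mulVec_eq_pow_smul h, hl, one_smul, one_mulVec, sub_self]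
  obtain ⟨w, hw, hfix⟩ := exists_mulVec_eq_zero_iff.mpr hdet
  exact hw (hA k hk w (by rwa [sub_mulVec, one_mulVec, sub_eq_zero] at hfix))

end Map

theorem eq_one_or_eq_neg_one_of_aeval_charpoly_eq_zero {A : Matrix n n ℤ} (hdet : IsUnit A.det)
    {r : ℚ} (hr : aeval r A.charpoly = 0) : r = 1 ∨ r = -1 := by
  obtain ⟨m, rfl, hm⟩ := exists_integer_of_is_root_of_monic A.charpoly_monic hr
  have hunit : IsUnit m := by
    refine isUnit_of_dvd_unit (hm.trans ⟨(-1) ^ Fintype.card n, ?_⟩) hdet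
    rw [det_eq_sign_charpoly_coeff, mul_comm]
  rcases Int.isUnit_iff.mp hunit with rfl | rfl <;> simp

theorem HasNoPeriodicVector.ratCast_ne_of_map_mulVec_eq_smul [Field K] [CharZero K]
    {A : Matrix n n ℤ} (hA : A.HasNoPeriodicVector) (hdet : IsUnit A.det) {v : n → K} {l : K}
    (hv : v ≠ 0) (h : A.map (algebraMap ℤ K) *ᵥ v = l • v) (r : ℚ) : (r : K) ≠ l := by
  rintro rfl
  have hr : aeval r A.charpoly = 0 := by
    apply FaithfulSMul.algebraMap_injective ℚ K
    rw [← aeval_algebraMap_apply, map_zero]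
    exact aeval_charpoly_eq_zero_of_map_mulVec_eq_smul hv h
  refine hA.pow_ne_one_of_map_mulVec_eq_smul hv h two_pos ?_
  rcases eq_one_or_eq_neg_one_of_aeval_charpoly_eq_zero hdet hr with rfl | rfl <;> norm_num

theorem mulVec_vecCons_one_eq_smul_iff [CommRing R] {M : Matrix (Fin 2) (Fin 2) R} {x l : R} :
    M *ᵥ ![1, x] = l • ![1, x] ↔ M 0 0 + M 0 1 * x = l ∧ M 1 0 + M 1 1 * x = l * x := by
  simp [funext_iff, Fin.forall_fin_two]

theorem exists_mulVec_vecCons_one_eq_smul [Field K] [IsAlgClosed K]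
    {M : Matrix (Fin 2) (Fin 2) K} (hM : M 0 1 ≠ 0) : ∃ l x : K, M *ᵥ ![1, x] = l • ![1, x] := by
  obtain ⟨l, hl⟩ := Module.End.exists_eigenvalue (toLin' M)
  obtain ⟨v, hv⟩ := hl.exists_hasEigenvector
  have hMv : M *ᵥ v = l • v := by simpa using hv.apply_eq_smul
  have hv0 : v 0 ≠ 0 := by
    intro h0
    have hv1 : v 1 ≠ 0 := fun h1 => hv.2 (by ext i; fin_cases i <;> assumption)
    have hrow0 := congrFun hMv 0
    simp [mulVec, vec2_dotProduct, h0] at hrow0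
    exact hv1 (hrow0.resolve_left hM)
  refine ⟨l, v 1 / v 0, ?_⟩
  have hscale : ![1, v 1 / v 0] = (v 0)⁻¹ • v := by
    ext i; fin_cases i <;> simp [hv0, div_eq_inv_mul]
  rw [hscale, mulVec_smul, hMv, smul_comm]

theorem HasNoPeriodicVector.apply_zero_one_ne_zero {A : Matrix (Fin 2) (Fin 2) ℤ}
    (hA : A.HasNoPeriodicVector) (hdet : IsUnit A.det) : A 0 1 ≠ 0 := by
  intro h01
  have h11 : IsUnit (A 1 1) :=
    isUnit_of_mul_isUnit_right (by simpa [det_fin_two, h01] using hdet)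
  have hfix : A *ᵥ ![0, 1] = A 1 1 • ![0, 1] := by simp [h01]
  have h2 := hA 2 two_pos ![0, 1] <| by
    rw [pow_mulVec_eq_pow_smul hfix, sq, Int.isUnit_mul_self h11, one_smul]
  simpa using congrFun h2 1

theorem HasNoPeriodicVector.eq_zero_of_intCast_add_mul_eq_zero [Field K] [CharZero K]
    {A : Matrix (Fin 2) (Fin 2) ℤ} (hA : A.HasNoPeriodicVector) (hdet : IsUnit A.det) {l x : K}
    (h : A.map (algebraMap ℤ K) *ᵥ ![1, x] = l • ![1, x]) {p q : ℤ}
    (hpq : (p : K) + q * x = 0) : p = 0 ∧ q = 0 := by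
  have hq : q = 0 := by
    by_contra hq
    have hx : x = ((-p / q : ℚ) : K) := by
      push_cast
      field_simp
      linear_combination hpq
    refine hA.ratCast_ne_of_map_mulVec_eq_smul hdet (v := ![1, x]) (by simp) h
      (A 0 0 + A 0 1 * (-p / q)) ?_
    rw [← (mulVec_vecCons_one_eq_smul_iff.mp h).1, hx]
    simp
  exact ⟨by simpa [hq] using hpq, hq⟩

end Matrix

namespace Matrix.SpecialLinearGroup

variable {R : Type*} [CommRing R]

def unipotent (c : R) : SpecialLinearGroup (Fin 2) R :=
  ⟨!![1, c; 0, 1], by simp [det_fin_two_of]⟩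

def diagonalUnit (u : Rˣ) : SpecialLinearGroup (Fin 2) R :=
  ⟨!![(u : R), 0; 0, ↑u⁻¹], by simp [det_fin_two_of]⟩

@[simp]
theorem coe_unipotent (c : R) : (unipotent c : Matrix (Fin 2) (Fin 2) R) = !![1, c; 0, 1] := rfl

@[simp]
theorem coe_diagonalUnit (u : Rˣ) :
    (diagonalUnit u : Matrix (Fin 2) (Fin 2) R) = !![(u : R), 0; 0, ↑u⁻¹] := rfl

def unipotentHom : Multiplicative R →* SpecialLinearGroup (Fin 2) R where
  toFun c := unipotent c.toAdd
  map_one' := Subtype.ext <| by simp [one_fin_two]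
  map_mul' a b := Subtype.ext <| by simp [add_comm]

def diagonalUnitHom : Rˣ →* SpecialLinearGroup (Fin 2) R where
  toFun := diagonalUnit
  map_one' := Subtype.ext <| by simp [one_fin_two]
  map_mul' a b := Subtype.ext <| by simp [mul_comm]

theorem unipotent_mul_unipotent (a b : R) : unipotent a * unipotent b = unipotent (a + b) :=
  (unipotentHom.map_mul (.ofAdd a) (.ofAdd b)).symm

theorem unipotent_zpow (c : R) (p : ℤ) : unipotent c ^ p = unipotent (p * c) := by
  rw [← zsmul_eq_mul]
  exact (map_zpow unipotentHom (Multiplicative.ofAdd c) p).symm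

theorem diagonalUnit_zpow (u : Rˣ) (r : ℤ) : diagonalUnit u ^ r = diagonalUnit (u ^ r) :=
  (map_zpow diagonalUnitHom u r).symm

theorem diagonalUnit_mul_unipotent_mul_inv (u : Rˣ) (c : R) :
    diagonalUnit u * unipotent c * (diagonalUnit u)⁻¹ = unipotent ((u : R) ^ 2 * c) := by
  rw [mul_inv_eq_iff_eq_mul]
  refine Subtype.ext ?_
  simp [pow_two, mul_right_comm _ c]

theorem unipotent_mul_diagonalUnit_eq_one_iff (c : R) (u : Rˣ) :
    unipotent c * diagonalUnit u = 1 ↔ c = 0 ∧ u = 1 := by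
  rw [SpecialLinearGroup.ext_iff]
  simp [Fin.forall_fin_two, and_comm]

end Matrix.SpecialLinearGroup

open Matrix.SpecialLinearGroup

theorem torus_bundle_hyperbolic_embeds_SL2 (A : Matrix (Fin 2) (Fin 2) ℤ)
    (hdet : A.det = 1 ∨ A.det = -1)
    (hhyp : ∀ n : ℕ, 0 < n → ∀ v : Fin 2 → ℤ, (A ^ n).mulVec v = v → v = 0) :
    ∃ (x μ : ℂ), μ ≠ 0 ∧
      ∃ a b t : Matrix.SpecialLinearGroup (Fin 2) ℂ,
        (a : Matrix (Fin 2) (Fin 2) ℂ) = !![1, 1; 0, 1] ∧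
        (b : Matrix (Fin 2) (Fin 2) ℂ) = !![1, x; 0, 1] ∧
        (t : Matrix (Fin 2) (Fin 2) ℂ) = !![μ, 0; 0, μ⁻¹] ∧
        t * a * t⁻¹ = a ^ (A 0 0) * b ^ (A 0 1) ∧
        t * b * t⁻¹ = a ^ (A 1 0) * b ^ (A 1 1) ∧
        ∀ p q r : ℤ, a ^ p * b ^ q * t ^ r = 1 → p = 0 ∧ q = 0 ∧ r = 0 := by
  have hA : A.HasNoPeriodicVector := hhyp
  have hunit : IsUnit A.det := Int.isUnit_iff.mpr hdet
  obtain ⟨l, x, hev⟩ := exists_mulVec_vecCons_one_eq_smul (M := A.map (algebraMap ℤ ℂ))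
    (by simpa using hA.apply_zero_one_ne_zero hunit)
  have hv : ![1, x] ≠ 0 := by simp
  obtain ⟨hrow0, hrow1⟩ := mulVec_vecCons_one_eq_smul_iff.mp hev
  obtain ⟨μ, rfl⟩ := IsAlgClosed.exists_pow_nat_eq l two_pos
  have hμ : μ ≠ 0 := by
    rintro rfl
    exact ne_zero_of_map_mulVec_eq_smul hunit hv hev (zero_pow two_ne_zero)
  refine ⟨x, μ, hμ, unipotent 1, unipotent x, diagonalUnit (Units.mk0 μ hμ), rfl, rfl, rfl,
    ?_, ?_, ?_⟩
  · simpa [diagonalUnit_mul_unipotent_mul_inv, unipotent_zpow, unipotent_mul_unipotent]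
      using congrArg unipotent hrow0.symm
  · simpa [diagonalUnit_mul_unipotent_mul_inv, unipotent_zpow, unipotent_mul_unipotent]
      using congrArg unipotent hrow1.symm
  · intro p q r h
    rw [unipotent_zpow, unipotent_zpow, diagonalUnit_zpow, unipotent_mul_unipotent,
      unipotent_mul_diagonalUnit_eq_one_iff] at h
    obtain ⟨hpq, hr⟩ := h
    have hr0 : r = 0 := by
      by_contra hr0
      refine hA.pow_ne_one_of_map_mulVec_eq_smul hv hev (Int.natAbs_pos.mpr hr0) ?_
      have hμr : μ ^ r.natAbs = 1 := by
        simpa only [Units.ext_iff, Units.val_pow_eq_pow_val, Units.val_mk0, Units.val_one]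
          using pow_natAbs_eq_one.mpr hr
      rw [pow_right_comm, hμr, one_pow]
    obtain ⟨hp, hq⟩ := hA.eq_zero_of_intCast_add_mul_eq_zero hunit hev (by simpa using hpq)
    exact ⟨hp, hq, hr0⟩
end

section
/- Let G embed in SL(2,C) and let Γ be an HNN extension of G with stable letter t identifying subgroups A and B of G via an isomorphism θ. If there exist a in A with a ≠ ±I and g in G with θ(a) = g a^{-1} g^{-1}, then Γ does not embed in SL(2,C). -/
/-!
In the HNN extension, `w = g⁻¹ t` conjugates `a` to `a⁻¹`. In `SL(2, ℂ)` an element `M`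
conjugating some `X ≠ ±1` to its inverse has trace zero: `M² = (tr M) M - 1` commutes with `X`,
and a nonzero trace would make `M` itself commute with `X`, forcing `X² = 1`. Hence `M² = -1`
and `M⁴ = 1`, whereas `w⁴` has `t`-exponent sum `4` and is not trivial.
-/

open scoped MatrixGroups

namespace Matrix

theorem mul_self_fin_two_s18 {R : Type*} [CommRing R] (m : Matrix (Fin 2) (Fin 2) R) :
    m * m = m.trace • m - m.det • 1 := by
  nontriviality R
  have h := m.aeval_self_charpoly
  rw [charpoly_fin_two] at h
  rw [← sub_eq_zero, ← h]
  simp [sq, Algebra.algebraMap_eq_smul_one]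
  abel

theorem eq_one_or_eq_neg_one_of_mul_self_eq_one {K : Type*} [Field K] [NeZero (2 : K)]
    {x : Matrix (Fin 2) (Fin 2) K} (hdet : x.det = 1) (hx : x * x = 1) : x = 1 ∨ x = -1 := by
  have htr : x.trace • x = (2 : K) • 1 := by
    have h := x.mul_self_fin_two_s18
    rw [hx, hdet, one_smul, eq_sub_iff_add_eq] at h
    rw [← h, two_smul]
  have htr0 : x.trace ≠ 0 := by
    rintro h0
    rw [h0, zero_smul] at htr
    have : (0 : K) = 2 := by simpa using congrFun (congrFun htr 0) 0
    exact two_ne_zero this.symm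
  obtain ⟨c, rfl⟩ : ∃ c : K, x = c • 1 := ⟨2 / x.trace, by
    rw [div_eq_inv_mul, ← smul_smul, ← htr, smul_smul, inv_mul_cancel₀ htr0, one_smul]⟩
  rw [det_smul, det_one, Fintype.card_fin, mul_one] at hdet
  rcases sq_eq_one_iff.mp hdet with rfl | rfl <;> simp

end Matrix

theorem commute_mul_self_of_conj_eq_inv {G : Type*} [Group G] {m x : G}
    (h : m * x * m⁻¹ = x⁻¹) : Commute (m * m) x := by
  have h' : m * x⁻¹ * m⁻¹ = x := by simpa [mul_assoc] using congrArg (·⁻¹) h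
  calc m * m * x = m * (m * x * m⁻¹) * m := by group
    _ = m * x⁻¹ * m⁻¹ * (m * m) := by rw [h]; group
    _ = x * (m * m) := by rw [h']

namespace Matrix.SpecialLinearGroup

variable {K : Type*} [Field K]

theorem trace_eq_zero_of_conj_eq_inv {m x : SL(2, K)} (hconj : m * x * m⁻¹ = x⁻¹)
    (hx : x * x ≠ 1) : (m : Matrix (Fin 2) (Fin 2) K).trace = 0 := by
  by_contra htr
  have hmm := congrArg (fun y : SL(2, K) => (y : Matrix (Fin 2) (Fin 2) K))
    (commute_mul_self_of_conj_eq_inv hconj).eq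
  simp only [coe_mul] at hmm
  rw [mul_self_fin_two_s18, m.det_coe, one_smul, sub_mul, mul_sub, smul_mul_assoc, mul_smul_comm,
    one_mul, mul_one, sub_left_inj] at hmm
  have hmx : m * x = x * m := Subtype.ext (by simpa using smul_right_injective _ htr hmm)
  apply hx
  rw [mul_eq_one_iff_eq_inv, ← hconj, hmx, mul_inv_cancel_right]

theorem pow_four_eq_one_of_trace_eq_zero {m : SL(2, K)}
    (htr : (m : Matrix (Fin 2) (Fin 2) K).trace = 0) : m ^ 4 = 1 := by
  have hsq : (m : Matrix (Fin 2) (Fin 2) K) * m = -1 := by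
    rw [mul_self_fin_two_s18, htr, m.det_coe]; simp
  rw [show 4 = 2 * 2 from rfl, pow_mul, sq]
  apply Subtype.ext
  simp [sq, hsq]

theorem mul_self_ne_one [NeZero (2 : K)] {x : SL(2, K)} (h1 : x ≠ 1)
    (hneg : (x : Matrix (Fin 2) (Fin 2) K) ≠ -1) : x * x ≠ 1 := by
  intro hx
  have hx' : (x : Matrix (Fin 2) (Fin 2) K) * x = 1 := by
    simpa using congrArg (fun y : SL(2, K) => (y : Matrix (Fin 2) (Fin 2) K)) hx
  rcases eq_one_or_eq_neg_one_of_mul_self_eq_one x.det_coe hx' with h | h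
  · exact h1 (Subtype.ext h)
  · exact hneg h

end Matrix.SpecialLinearGroup

namespace HNNExtension

variable {G : Type*} [Group G] {A B : Subgroup G} {φ : A ≃* B}

def tExponent : HNNExtension G A B φ →* Multiplicative ℤ :=
  lift 1 (Multiplicative.ofAdd 1) fun _ => by simp

@[simp]
theorem tExponent_of (g : G) : tExponent (of g : HNNExtension G A B φ) = 1 :=
  lift_of _ _ _ g

@[simp]
theorem tExponent_t : tExponent (t : HNNExtension G A B φ) = Multiplicative.ofAdd 1 :=
  lift_t _ _ _

theorem of_mul_t_pow_ne_one (g : G) {n : ℕ} (hn : n ≠ 0) :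
    (of g * t : HNNExtension G A B φ) ^ n ≠ 1 := by
  intro h
  have := congrArg tExponent h
  rw [map_pow, map_mul, tExponent_of, tExponent_t, one_mul, ← ofAdd_nsmul, map_one,
    ofAdd_eq_one, nsmul_one, Nat.cast_eq_zero] at this
  exact hn this

theorem of_mul_t_conj_of (g : G) (a : A) :
    (of g * t) * of (a : G) * (of g * t : HNNExtension G A B φ)⁻¹ = of (g * φ a * g⁻¹) := by
  rw [map_mul, map_mul, map_inv, equiv_eq_conj]
  group

end HNNExtension

open HNNExtension Matrix.SpecialLinearGroup in
theorem hnn_inverting_conjugation_does_not_embed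
    (G : Subgroup (Matrix.SpecialLinearGroup (Fin 2) ℂ))
    (A B : Subgroup G) (θ : A ≃* B)
    (a : G) (ha : a ∈ A)
    (ha1 : (a : Matrix.SpecialLinearGroup (Fin 2) ℂ) ≠ 1)
    (haneg : ((a : Matrix.SpecialLinearGroup (Fin 2) ℂ) : Matrix (Fin 2) (Fin 2) ℂ) ≠ -1)
    (g : G) (hθ : (θ ⟨a, ha⟩ : G) = g * a⁻¹ * g⁻¹) :
    ¬ ∃ ψ : HNNExtension G A B θ →* Matrix.SpecialLinearGroup (Fin 2) ℂ,
        Function.Injective ψ := by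
  rintro ⟨ψ, hψ⟩
  have hconj : (of g⁻¹ * t) * of a * (of g⁻¹ * t : HNNExtension G A B θ)⁻¹ = of a⁻¹ := by
    rw [of_mul_t_conj_of g⁻¹ ⟨a, ha⟩, hθ]
    congr 1
    group
  have hsq : ψ (of a) * ψ (of a) ≠ 1 := by
    rw [← map_mul, ← map_mul, ne_eq, map_eq_one_iff ψ hψ, map_eq_one_iff of (of_injective θ)]
    exact fun h => mul_self_ne_one ha1 haneg (congrArg Subtype.val h)
  have hpow : ψ (of g⁻¹ * t) ^ 4 = 1 := pow_four_eq_one_of_trace_eq_zero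
    (trace_eq_zero_of_conj_eq_inv (by simpa using congrArg ψ hconj) hsq)
  exact of_mul_t_pow_ne_one g⁻¹ four_ne_zero (hψ (by simpa using hpow))
end

section
/- There is no pair of elements A, B generating a non-abelian free subgroup of SL(2,C) such that A, B, AB and the commutator ABA^{-1}B^{-1} all have the same trace z. In fact, the Fricke trace identity tr(A)^2 + tr(B)^2 + tr(AB)^2 − 2 = tr(A)·tr(B)·tr(AB) + tr(ABA^{-1}B^{-1}) forces (z−2)(z^2−z−1) = 0; z = 2 makes ⟨A,B⟩ metabelian, and the other roots force an element of order 5. -/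
/-!
Substituting the common trace `z` into the Fricke identity gives `(z - 2) (z² - z - 1) = 0`.
If `z = 2`, then `A` and `B` are unipotent with `tr (A B) = 2`, which forces them to share their
fixed line, so they commute. Otherwise `z² = z + 1`, and Cayley–Hamilton gives `A⁵ = -1`, so `A`
has finite order. A free group of rank two has neither commuting generators nor torsion.
-/

open Matrix Polynomial
open scoped MatrixGroups

theorem FreeGroup.not_commute_of_ne {α : Type*} {a b : α} (hab : a ≠ b) :
    ¬Commute (of a) (of b) := by
  classical
  intro h
  simpa [toWord_mul, toWord_of, hab] using congrArg toWord h.eq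

namespace Matrix

variable {R : Type*} [CommRing R]

theorem trace_mul_mul_adjugate_mul_adjugate (A B : Matrix (Fin 2) (Fin 2) R) :
    trace (A * B * adjugate A * adjugate B) =
      det B * trace A ^ 2 + det A * trace B ^ 2 + trace (A * B) ^ 2
        - trace A * trace B * trace (A * B) - 2 * det A * det B := by
  rw [eta_fin_two A, eta_fin_two B]
  simp only [adjugate_fin_two_of, mul_fin_two, trace_fin_two_of, det_fin_two_of]
  ring

theorem SpecialLinearGroup.fricke_trace_identity (A B : SL(2, R)) :
    trace (A : Matrix (Fin 2) (Fin 2) R) ^ 2 + trace (B : Matrix (Fin 2) (Fin 2) R) ^ 2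
        + trace ((A * B : SL(2, R)) : Matrix (Fin 2) (Fin 2) R) ^ 2 - 2 =
      trace (A : Matrix (Fin 2) (Fin 2) R) * trace (B : Matrix (Fin 2) (Fin 2) R)
          * trace ((A * B : SL(2, R)) : Matrix (Fin 2) (Fin 2) R)
        + trace ((A * B * A⁻¹ * B⁻¹ : SL(2, R)) : Matrix (Fin 2) (Fin 2) R) := by
  simp only [coe_mul, coe_inv, trace_mul_mul_adjugate_mul_adjugate, det_coe]
  ring

theorem commute_of_trace_eq_two [NoZeroDivisors R] {A B : Matrix (Fin 2) (Fin 2) R}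
    (hA : A.det = 1) (hB : B.det = 1) (htA : A.trace = 2) (htB : B.trace = 2)
    (htAB : (A * B).trace = 2) : Commute A B := by
  rw [eta_fin_two A, eta_fin_two B] at *
  set a := A 0 0; set b := A 0 1; set c := A 1 0; set d := A 1 1
  set e := B 0 0; set f := B 0 1; set g := B 1 0; set h := B 1 1
  simp only [det_fin_two_of, trace_fin_two_of, mul_fin_two] at hA hB htA htB htAB
  have hbc : b * c = -(a - 1) ^ 2 := by linear_combination a * htA - hA
  have hfg : f * g = -(e - 1) ^ 2 := by linear_combination e * htB - hB
  have hs : b * g + c * f = -2 * (a - 1) * (e - 1) := by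
    linear_combination htAB - h * htA + (a - 2) * htB
  -- The trace conditions determine the entries of `A B - B A` only through their squares.
  have eq_of_sq_sub_eq_zero {x y : R} (hxy : (x - y) ^ 2 = 0) : x = y :=
    sub_eq_zero.mp (pow_eq_zero_iff two_ne_zero |>.mp hxy)
  have hbg : b * g = c * f := eq_of_sq_sub_eq_zero <| by
    linear_combination (b * g + c * f - 2 * (a - 1) * (e - 1)) * hs - 4 * f * g * hbc
      + 4 * (a - 1) ^ 2 * hfg
  have hf : f * (a - 1) = b * (e - 1) := eq_of_sq_sub_eq_zero <| by
    linear_combination f ^ 2 * hbc + b ^ 2 * hfg - b * f * hs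
  have hg : g * (a - 1) = c * (e - 1) := eq_of_sq_sub_eq_zero <| by
    linear_combination g ^ 2 * hbc + c ^ 2 * hfg - c * g * hs
  rw [Commute, SemiconjBy, mul_fin_two, mul_fin_two]
  ext i j
  fin_cases i <;> fin_cases j <;>
    simp only [Fin.zero_eta, Fin.mk_one, Fin.isValue, of_apply, cons_val', cons_val_zero,
      cons_val_one, cons_val_fin_one]
  · linear_combination hbg
  · linear_combination 2 * hf - f * htA + b * htB
  · linear_combination -2 * hg + g * htA - c * htB
  · linear_combination -hbg

theorem pow_five_eq_neg_one_of_trace_sq [Nontrivial R] {M : Matrix (Fin 2) (Fin 2) R}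
    (hdet : M.det = 1) (htr : M.trace ^ 2 = M.trace + 1) : M ^ 5 = -1 := by
  set c : R[X] := C M.trace
  have hc : c ^ 2 - c - 1 = 0 := by simp [c, ← C_pow, htr]
  have hdvd : X ^ 5 + 1 =
      M.charpoly * (X ^ 3 + c * X ^ 2 + (c ^ 2 - 1) * X + (c ^ 3 - 2 * c)) := by
    rw [charpoly_fin_two, hdet, C_1]
    linear_combination ((c ^ 2 + c - 1) * X - (c + 1)) * hc
  have := congrArg (aeval M) hdvd
  rw [map_mul, aeval_self_charpoly, zero_mul, map_add, map_pow, aeval_X, map_one] at this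
  exact eq_neg_of_add_eq_zero_left this

end Matrix

theorem no_free_pair_with_equal_traces
    (A B : Matrix.SpecialLinearGroup (Fin 2) ℂ) (z : ℂ)
    (hA : Matrix.trace (A : Matrix (Fin 2) (Fin 2) ℂ) = z)
    (hB : Matrix.trace (B : Matrix (Fin 2) (Fin 2) ℂ) = z)
    (hAB : Matrix.trace ((A * B : Matrix.SpecialLinearGroup (Fin 2) ℂ) :
        Matrix (Fin 2) (Fin 2) ℂ) = z)
    (hComm : Matrix.trace ((A * B * A⁻¹ * B⁻¹ : Matrix.SpecialLinearGroup (Fin 2) ℂ) :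
        Matrix (Fin 2) (Fin 2) ℂ) = z) :
    ¬ ∃ φ : FreeGroup (Fin 2) →* Matrix.SpecialLinearGroup (Fin 2) ℂ,
        Function.Injective φ ∧ φ (FreeGroup.of 0) = A ∧ φ (FreeGroup.of 1) = B := by
  rintro ⟨φ, hφ, h0, h1⟩
  have hfricke := SpecialLinearGroup.fricke_trace_identity A B
  rw [hA, hB, hAB, hComm] at hfricke
  have hcubic : (z - 2) * (z ^ 2 - z - 1) = 0 := by linear_combination -hfricke
  rcases mul_eq_zero.mp hcubic with h2 | hgolden
  · obtain rfl : z = 2 := sub_eq_zero.mp h2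
    have hcomm : Commute A B := Subtype.ext (commute_of_trace_eq_two A.2 B.2 hA hB hAB)
    exact FreeGroup.not_commute_of_ne zero_ne_one <| hφ <| by
      rw [map_mul, map_mul, h0, h1, hcomm.eq]
  · have hA5 : (A : Matrix (Fin 2) (Fin 2) ℂ) ^ 5 = -1 :=
      pow_five_eq_neg_one_of_trace_sq A.2 (by rw [hA]; linear_combination hgolden)
    have hM10 : (A : Matrix (Fin 2) (Fin 2) ℂ) ^ 10 = 1 := by
      rw [pow_mul _ 5 2, hA5, neg_one_sq]
    have hA10 : A ^ 10 = 1 := Subtype.ext (by simpa using hM10)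
    exact FreeGroup.of_ne_one (0 : Fin 2) <| (pow_eq_one_iff_left (by norm_num : 10 ≠ 0)).mp <|
      hφ <| by rw [map_pow, h0, hA10, map_one]
end
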